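/- arXiv:1208.4218 — 8 statements merged into one kernel-verified Lean document; each statement's English description precedes it below -/
import Mathlib

section
/- The 3 × 3 × 3 array A defined by A(1,1,1)=1; A(i,j,1)=1/2 for i,j ∈ {2,3}; A(1,j,k)=1/2 for j,k ∈ {2,3}; A(i,1,k)=1/2 for i,k ∈ {2,3}; A(2,2,2)=A(3,3,2)=A(2,3,3)=A(3,2,3)=1/2; and all other entries 0, is a vertex of the polytope of 3 × 3 × 3 tristochastic arrays, and A is not a zero-one array. -/
def IsVertex {V : Type*} [AddCommGroup V] [Module ℝ V] (P : Set V) (A : V) : Prop :=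
  A ∈ P ∧ ∀ B ∈ P, ∀ C ∈ P, A = (1 / 2 : ℝ) • (B + C) → B = C

def Tristochastic {n : ℕ} (A : Fin n → Fin n → Fin n → ℝ) : Prop :=
  (∀ i j k, 0 ≤ A i j k) ∧
  (∀ i j, ∑ k, A i j k = 1) ∧
  (∀ i k, ∑ j, A i j k = 1) ∧
  (∀ j k, ∑ i, A i j k = 1)

/-!
If `A = (B + C) / 2` with `B, C ≥ 0`, then `B, C ≤ 2 A`, so `B` and `C` vanish wherever `A` does.
For the array at hand, the line-sum equations together with this zero pattern have `A` as their
only nonnegative solution, so `B = A = C`.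
-/

theorem isVertex_of_forall_le_two_smul {V : Type*} [AddCommGroup V] [PartialOrder V]
    [IsOrderedAddMonoid V] [Module ℝ V] {P : Set V} {A : V} (hA : A ∈ P)
    (hP : ∀ B ∈ P, 0 ≤ B) (h : ∀ B ∈ P, B ≤ (2 : ℝ) • A → B = A) : IsVertex P A := by
  refine ⟨hA, fun B hB C hC hBC => ?_⟩
  have hsum : (2 : ℝ) • A = B + C := by
    rw [hBC, smul_smul]; norm_num
  rw [h B hB (hsum ▸ le_add_of_nonneg_right (hP C hC)),
    h C hC (hsum ▸ le_add_of_nonneg_left (hP B hB))]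

theorem Fin.forall_fin_three {p : Fin 3 → Prop} : (∀ i, p i) ↔ p 0 ∧ p 1 ∧ p 2 :=
  ⟨fun h => ⟨h 0, h 1, h 2⟩, fun ⟨h0, h1, h2⟩ i => by fin_cases i <;> assumption⟩

theorem Tristochastic.nonneg {n : ℕ} {A : Fin n → Fin n → Fin n → ℝ} (hA : Tristochastic A) :
    0 ≤ A := fun i j k => hA.1 i j k

noncomputable def halfArray : Fin 3 → Fin 3 → Fin 3 → ℝ := fun i j k =>
  ![![![(1 : ℝ), 0, 0], ![0, 1/2, 1/2], ![0, 1/2, 1/2]],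
    ![![0, 1/2, 1/2], ![1/2, 1/2, 0], ![1/2, 0, 1/2]],
    ![![0, 1/2, 1/2], ![1/2, 0, 1/2], ![1/2, 1/2, 0]]] k i j

theorem tristochastic_halfArray : Tristochastic halfArray := by
  simp only [Tristochastic, Fin.sum_univ_three, Fin.forall_fin_three]
  norm_num [halfArray, Matrix.cons_val_two, Matrix.tail_cons, Matrix.head_cons]

/-- The zeros of `halfArray` force `B 0 0 0 = 1` and make the block of `B · · 0` on `{1, 2}²`
doubly stochastic, with diagonal `a` say. The tubes `B 1 1 ·` and `B 2 2 ·` then give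
`B 1 1 1 = B 2 2 1 = 1 - a`, while the lines of layer `1` give `B 1 1 1 + B 2 2 1 = 1`;
hence `a = 1/2`, and the remaining entries follow. -/
theorem eq_halfArray_of_le {B : Fin 3 → Fin 3 → Fin 3 → ℝ} (hB : Tristochastic B)
    (hle : B ≤ (2 : ℝ) • halfArray) : B = halfArray := by
  obtain ⟨hnn, ht, hr, hc⟩ := hB
  replace hle : ∀ i j k, B i j k ≤ 2 * halfArray i j k := hle
  suffices ∀ i j k, B i j k = halfArray i j k from funext₃ this
  simp only [Fin.sum_univ_three, Fin.forall_fin_three] at ht hr hc hnn hle ⊢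
  norm_num [halfArray, Matrix.cons_val_two, Matrix.tail_cons, Matrix.head_cons] at hle ⊢
  casesm* _ ∧ _
  and_intros <;> linarith

/-- The explicit 3×3×3 array with layers
`A₁ = [[1,0,0],[0,½,½],[0,½,½]]`, `A₂ = [[0,½,½],[½,½,0],[½,0,½]]`,
`A₃ = [[0,½,½],[½,0,½],[½,½,0]]` (where `A i j k` is the `(i,j)` entry of layer `k`)
is a vertex of the polytope of tristochastic arrays, and is not a zero-one array. -/
theorem stmt2 :
    let A : Fin 3 → Fin 3 → Fin 3 → ℝ := fun i j k =>
      ![![![(1 : ℝ), 0, 0], ![0, 1/2, 1/2], ![0, 1/2, 1/2]],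
        ![![0, 1/2, 1/2], ![1/2, 1/2, 0], ![1/2, 0, 1/2]],
        ![![0, 1/2, 1/2], ![1/2, 0, 1/2], ![1/2, 1/2, 0]]] k i j
    IsVertex {B | Tristochastic B} A ∧ ¬ (∀ i j k, A i j k = 0 ∨ A i j k = 1) := by
  refine ⟨isVertex_of_forall_le_two_smul tristochastic_halfArray
    (fun _ hB => hB.nonneg) (fun _ => eq_halfArray_of_le),
    fun h => absurd (h 0 1 1) (by norm_num [halfArray])⟩
end

section
/- Let A be a tristochastic n × n × n array all of whose nonzero entries equal 1/2 (so every line contains exactly two entries equal to 1/2). Define the graph G(A) on the support of A where two support elements are adjacent iff they lie on a common line. If no connected component of G(A) is bipartite, then A is a vertex of the polytope of tristochastic arrays. -/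
/-- The graph `G(A)` on the support of `A`, joining two support elements iff they
lie on a common line (agree in two of the three coordinates). -/
def lineGraph {n : ℕ} (A : Fin n → Fin n → Fin n → ℝ) :
    SimpleGraph {x : Fin n × Fin n × Fin n // A x.1 x.2.1 x.2.2 ≠ 0} where
  Adj x y := x ≠ y ∧
    ((x.1.1 = y.1.1 ∧ x.1.2.1 = y.1.2.1) ∨
     (x.1.1 = y.1.1 ∧ x.1.2.2 = y.1.2.2) ∨
     (x.1.2.1 = y.1.2.1 ∧ x.1.2.2 = y.1.2.2))
  symm := by
    constructor
    rintro x y ⟨hxy, h⟩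
    refine ⟨hxy.symm, ?_⟩
    rcases h with ⟨h1, h2⟩ | ⟨h1, h2⟩ | ⟨h1, h2⟩
    · exact Or.inl ⟨h1.symm, h2.symm⟩
    · exact Or.inr (Or.inl ⟨h1.symm, h2.symm⟩)
    · exact Or.inr (Or.inr ⟨h1.symm, h2.symm⟩)
  loopless := by constructor; rintro x ⟨hx, -⟩; exact hx rfl

open Finset

lemma sum_eq_add_of_eq_half {ι : Type*} [Fintype ι] {a f : ι → ℝ} (ha0 : ∀ u, 0 ≤ a u)
    (ha1 : ∑ u, a u = 1) (hhalf : ∀ u, a u ≠ 0 → a u = 1 / 2)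
    (hf : ∀ u, a u = 0 → f u = 0) {s t : ι} (hst : s ≠ t) (hs : a s ≠ 0) (ht : a t ≠ 0) :
    ∑ u, f u = f s + f t := by
  classical
  have ha_eq_zero : ∀ u, u ≠ s → u ≠ t → a u = 0 := by
    intro u hus hut
    by_contra hu
    have hle : ∑ x ∈ {s, t, u}, a x ≤ ∑ x, a x :=
      sum_le_sum_of_subset_of_nonneg (subset_univ _) fun x _ _ => ha0 x
    rw [sum_insert (by simp [hst, hus.symm]), sum_pair hut.symm, hhalf s hs, hhalf t ht,
      hhalf u hu, ha1] at hle
    norm_num at hle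
  rw [← sum_pair hst]
  refine (sum_subset (subset_univ _) fun u _ hu => hf u ?_).symm
  simp only [mem_insert, mem_singleton, not_or] at hu
  exact ha_eq_zero u hu.1 hu.2

namespace SimpleGraph

variable {V : Type*} {G : SimpleGraph V} {f : V → ℝ}

lemma Reachable.abs_eq_of_adj_add_eq_zero (hf : ∀ x y, G.Adj x y → f x + f y = 0) {x y : V}
    (hxy : G.Reachable x y) : |f x| = |f y| := by
  obtain ⟨p⟩ := hxy
  induction p with
  | nil => rfl
  | cons h _ ih => rw [← ih, eq_neg_of_add_eq_zero_left (hf _ _ h), abs_neg]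

lemma colorable_two_induce_connectedComponent_of_adj_add_eq_zero
    (hf : ∀ x y, G.Adj x y → f x + f y = 0) {v : V} (hv : f v ≠ 0) :
    (G.induce {w | G.connectedComponentMk w = G.connectedComponentMk v}).Colorable 2 := by
  have hne : ∀ w : {w | G.connectedComponentMk w = G.connectedComponentMk v}, f w ≠ 0 := by
    rintro ⟨w, hw⟩
    have := (ConnectedComponent.eq.mp hw).abs_eq_of_adj_add_eq_zero hf
    rwa [← abs_ne_zero, this, abs_ne_zero]
  rw [← Fintype.card_bool]
  refine Coloring.colorable (G := G.induce _) (.mk (fun w => decide (0 < f w)) fun {w w'} h => ?_)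
  have hsum := hf w w' h
  rcases (hne w).lt_or_gt with hlt | hgt
  · simp [hlt.not_gt, show 0 < f w' by linarith]
  · simp [hgt, show ¬ 0 < f w' by linarith]

end SimpleGraph

variable {n : ℕ}

lemma lineGraph_adj_add_eq_zero {A d : Fin n → Fin n → Fin n → ℝ} (hA : Tristochastic A)
    (hhalf : ∀ i j k, A i j k ≠ 0 → A i j k = 1 / 2)
    (hd : ∀ i j k, A i j k = 0 → d i j k = 0)
    (hd₁ : ∀ i j, ∑ k, d i j k = 0) (hd₂ : ∀ i k, ∑ j, d i j k = 0)
    (hd₃ : ∀ j k, ∑ i, d i j k = 0) :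
    ∀ x y, (lineGraph A).Adj x y → d x.1.1 x.1.2.1 x.1.2.2 + d y.1.1 y.1.2.1 y.1.2.2 = 0 := by
  obtain ⟨hA0, hA1, hA2, hA3⟩ := hA
  rintro ⟨⟨i, j, k⟩, hx⟩ ⟨⟨i', j', k'⟩, hy⟩ ⟨hne, hline⟩
  simp only [ne_eq, Subtype.mk.injEq, Prod.mk.injEq] at hne hline hx hy ⊢
  obtain ⟨rfl, rfl⟩ | ⟨rfl, rfl⟩ | ⟨rfl, rfl⟩ := hline
  · have hk : k ≠ k' := by rintro rfl; exact hne ⟨rfl, rfl, rfl⟩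
    rw [← hd₁ i j, sum_eq_add_of_eq_half (hA0 i j) (hA1 i j) (hhalf i j) (hd i j) hk hx hy]
  · have hj : j ≠ j' := by rintro rfl; exact hne ⟨rfl, rfl, rfl⟩
    rw [← hd₂ i k, sum_eq_add_of_eq_half (hA0 i · k) (hA2 i k) (hhalf i · k) (hd i · k) hj hx hy]
  · have hi : i ≠ i' := by rintro rfl; exact hne ⟨rfl, rfl, rfl⟩
    rw [← hd₃ j k, sum_eq_add_of_eq_half (hA0 · j k) (hA3 j k) (hhalf · j k) (hd · j k) hi hx hy]

/-- If `A` is tristochastic, all nonzero entries of `A` equal `1/2`, and no connected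
component of `G(A)` is bipartite, then `A` is a vertex of the tristochastic polytope. -/
theorem stmt3 {n : ℕ} (A : Fin n → Fin n → Fin n → ℝ)
    (hA : Tristochastic A)
    (hhalf : ∀ i j k, A i j k ≠ 0 → A i j k = 1 / 2)
    (hnobip : ¬ ∃ c : (lineGraph A).ConnectedComponent,
      (SimpleGraph.induce {v | (lineGraph A).connectedComponentMk v = c}
        (lineGraph A)).Colorable 2) :
    IsVertex {B | Tristochastic B} A := by
  refine ⟨hA, fun B hB C hC hABC => ?_⟩
  have hpt : ∀ i j k, A i j k = (B i j k + C i j k) / 2 := fun i j k => by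
    simpa [div_eq_inv_mul] using congrFun (congrFun (congrFun hABC i) j) k
  have hd : ∀ i j k, A i j k = 0 → (B - C) i j k = 0 := fun i j k h => by
    have := hpt i j k
    simp only [Pi.sub_apply]
    linarith [hB.1 i j k, hC.1 i j k]
  have hadj := lineGraph_adj_add_eq_zero hA hhalf hd
    (by simp [sum_sub_distrib, hB.2.1, hC.2.1]) (by simp [sum_sub_distrib, hB.2.2.1, hC.2.2.1])
    (by simp [sum_sub_distrib, hB.2.2.2, hC.2.2.2])
  by_contra hBC
  obtain ⟨v, hv⟩ : ∃ v : {x : Fin n × Fin n × Fin n // A x.1 x.2.1 x.2.2 ≠ 0},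
      (B - C) v.1.1 v.1.2.1 v.1.2.2 ≠ 0 := by
    by_contra! hzero
    refine hBC (sub_eq_zero.mp (funext₃ fun i j k => ?_))
    by_cases h : A i j k = 0
    exacts [hd i j k h, hzero ⟨(i, j, k), h⟩]
  exact hnobip ⟨_, SimpleGraph.colorable_two_induce_connectedComponent_of_adj_add_eq_zero hadj hv⟩
end

section
/- Let A be a tristochastic n × n × n array with exactly two entries equal to 1/2 in every line and all other entries zero, and define the graph G(A) on supp(A) joining two support elements when they share a line. If some connected component of G(A) is bipartite, then A is not a vertex of the polytope of tristochastic arrays: there exist distinct tristochastic arrays X, Y with A = (X+Y)/2. -/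
open Finset

theorem Finset.sum_eq_zero_of_card_filter_eq_two {ι M : Type*} [Fintype ι] [DecidableEq ι]
    [AddCommMonoid M] {p : ι → Prop} [DecidablePred p] {f : ι → M} (hcard : #(univ.filter p) = 2)
    (hout : ∀ i, ¬ p i → f i = 0) (hpair : ∀ i j, p i → p j → i ≠ j → f i + f j = 0) :
    ∑ i, f i = 0 := by
  obtain ⟨a, b, hab, hS⟩ := card_eq_two.mp hcard
  have hp : ∀ x ∈ ({a, b} : Finset ι), p x := fun x hx => (mem_filter.mp (hS ▸ hx)).2
  rw [← sum_subset (subset_univ (univ.filter p)) fun i _ hi => hout i (by simpa using hi),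
    hS, sum_pair hab]
  exact hpair a b (hp a (by simp)) (hp b (by simp)) hab

namespace SimpleGraph.ConnectedComponent

variable {V : Type*} {G : SimpleGraph V}

open Classical in
noncomputable def sign (c : G.ConnectedComponent)
    (col : (G.induce {v | G.connectedComponentMk v = c}).Coloring (Fin 2)) (v : V) : ℝ :=
  if h : G.connectedComponentMk v = c then (if col ⟨v, h⟩ = 0 then 1 else -1) else 0

variable (c : G.ConnectedComponent)
  (col : (G.induce {v | G.connectedComponentMk v = c}).Coloring (Fin 2))

theorem sign_add_sign_of_adj {u v : V} (huv : G.Adj u v) : c.sign col u + c.sign col v = 0 := by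
  have hmk : G.connectedComponentMk u = G.connectedComponentMk v := ConnectedComponent.sound huv.reachable
  by_cases hu : G.connectedComponentMk u = c
  · have hv : G.connectedComponentMk v = c := hmk ▸ hu
    have hcol : col ⟨u, hu⟩ ≠ col ⟨v, hv⟩ := col.valid huv
    have fin_two : ∀ a b : Fin 2, a ≠ b → (a = 0 ∧ b ≠ 0) ∨ (a ≠ 0 ∧ b = 0) := by decide
    rw [sign, sign, dif_pos hu, dif_pos hv]
    rcases fin_two _ _ hcol with ⟨h1, h2⟩ | ⟨h1, h2⟩
    · rw [if_pos h1, if_neg h2]; ring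
    · rw [if_neg h1, if_pos h2]; ring
  · have hv : G.connectedComponentMk v ≠ c := fun h => hu (hmk.trans h)
    rw [sign, sign, dif_neg hu, dif_neg hv, add_zero]

theorem abs_sign_le_one (v : V) : |c.sign col v| ≤ 1 := by
  unfold sign
  split_ifs <;> norm_num

theorem sign_ne_zero {v : V} (hv : G.connectedComponentMk v = c) : c.sign col v ≠ 0 := by
  rw [sign, dif_pos hv]
  split_ifs <;> norm_num

end SimpleGraph.ConnectedComponent

section Arrays

variable {n : ℕ}

def HasZeroLineSums (D : Fin n → Fin n → Fin n → ℝ) : Prop :=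
  (∀ i j, ∑ k, D i j k = 0) ∧ (∀ i k, ∑ j, D i j k = 0) ∧ (∀ j k, ∑ i, D i j k = 0)

theorem HasZeroLineSums.smul {D : Fin n → Fin n → Fin n → ℝ} (hD : HasZeroLineSums D) (r : ℝ) :
    HasZeroLineSums (r • D) := by
  refine ⟨fun i j => ?_, fun i k => ?_, fun j k => ?_⟩ <;>
    simp only [Pi.smul_apply, smul_eq_mul, ← mul_sum, hD.1, hD.2.1, hD.2.2, mul_zero]

theorem Tristochastic.add_of_abs_le {A D : Fin n → Fin n → Fin n → ℝ} (hA : Tristochastic A)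
    (hD : HasZeroLineSums D) (hle : ∀ i j k, |D i j k| ≤ A i j k) : Tristochastic (A + D) := by
  refine ⟨fun i j k => ?_, fun i j => ?_, fun i k => ?_, fun j k => ?_⟩
  · linarith [show (A + D) i j k = A i j k + D i j k from rfl, neg_abs_le (D i j k), hle i j k]
  all_goals simp only [Pi.add_apply, sum_add_distrib, hA.2.1, hA.2.2.1, hA.2.2.2,
    hD.1, hD.2.1, hD.2.2, add_zero]

theorem Tristochastic.sub_of_abs_le {A D : Fin n → Fin n → Fin n → ℝ} (hA : Tristochastic A)
    (hD : HasZeroLineSums D) (hle : ∀ i j k, |D i j k| ≤ A i j k) : Tristochastic (A - D) := by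
  rw [sub_eq_add_neg, ← neg_one_smul ℝ D]
  exact hA.add_of_abs_le (hD.smul (-1)) fun i j k => by simpa using hle i j k

end Arrays

section SignArray

variable {n : ℕ} {A : Fin n → Fin n → Fin n → ℝ} (c : (lineGraph A).ConnectedComponent)
  (col : ((lineGraph A).induce {v | (lineGraph A).connectedComponentMk v = c}).Coloring (Fin 2))

noncomputable def signArray : Fin n → Fin n → Fin n → ℝ :=
  fun i j k => if h : A i j k = 0 then 0 else c.sign col ⟨(i, j, k), h⟩

theorem signArray_of_eq_zero {i j k : Fin n} (h : A i j k = 0) : signArray c col i j k = 0 := by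
  rw [signArray, dif_pos h]

theorem abs_signArray_le_one (i j k : Fin n) : |signArray c col i j k| ≤ 1 := by
  unfold signArray
  split_ifs
  · norm_num
  · exact c.abs_sign_le_one col _

theorem signArray_ne_zero : signArray c col ≠ 0 := by
  obtain ⟨v, hv⟩ := c.exists_rep
  intro h
  have hv0 := congrFun (congrFun (congrFun h v.1.1) v.1.2.1) v.1.2.2
  rw [signArray, dif_neg v.2] at hv0
  exact c.sign_ne_zero col hv hv0

theorem signArray_add_signArray_of_adj {i j k i' j' k' : Fin n} (h : A i j k ≠ 0)
    (h' : A i' j' k' ≠ 0) (hadj : (lineGraph A).Adj ⟨(i, j, k), h⟩ ⟨(i', j', k'), h'⟩) :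
    signArray c col i j k + signArray c col i' j' k' = 0 := by
  rw [signArray, signArray, dif_neg h, dif_neg h']
  exact c.sign_add_sign_of_adj col hadj

section HalfLines

variable (hzero : ∀ i j k, A i j k ≠ 1 / 2 → A i j k = 0)
include hzero

theorem abs_signArray_le_two_mul (i j k : Fin n) : |signArray c col i j k| ≤ 2 * A i j k := by
  by_cases h : A i j k = 1 / 2
  · rw [h]; linarith [abs_signArray_le_one c col i j k]
  · rw [hzero i j k h, signArray_of_eq_zero c col (hzero i j k h)]; norm_num

theorem signArray_hasZeroLineSums
    (htwo1 : ∀ i j, (Finset.univ.filter fun k => A i j k = 1 / 2).card = 2)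
    (htwo2 : ∀ i k, (Finset.univ.filter fun j => A i j k = 1 / 2).card = 2)
    (htwo3 : ∀ j k, (Finset.univ.filter fun i => A i j k = 1 / 2).card = 2) :
    HasZeroLineSums (signArray c col) := by
  have ne_zero {x : ℝ} (hx : x = 1 / 2) : x ≠ 0 := by norm_num [hx]
  refine ⟨fun i j => ?_, fun i k => ?_, fun j k => ?_⟩
  · refine sum_eq_zero_of_card_filter_eq_two (htwo1 i j)
      (fun k hk => signArray_of_eq_zero c col (hzero i j k hk)) fun k k' hk hk' hne => ?_
    exact signArray_add_signArray_of_adj c col (ne_zero hk) (ne_zero hk')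
      ⟨fun h => hne (congrArg (fun v => v.1.2.2) h), Or.inl ⟨rfl, rfl⟩⟩
  · refine sum_eq_zero_of_card_filter_eq_two (htwo2 i k)
      (fun j hj => signArray_of_eq_zero c col (hzero i j k hj)) fun j j' hj hj' hne => ?_
    exact signArray_add_signArray_of_adj c col (ne_zero hj) (ne_zero hj')
      ⟨fun h => hne (congrArg (fun v => v.1.2.1) h), Or.inr (Or.inl ⟨rfl, rfl⟩)⟩
  · refine sum_eq_zero_of_card_filter_eq_two (htwo3 j k)
      (fun i hi => signArray_of_eq_zero c col (hzero i j k hi)) fun i i' hi hi' hne => ?_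
    exact signArray_add_signArray_of_adj c col (ne_zero hi) (ne_zero hi')
      ⟨fun h => hne (congrArg (fun v => v.1.1) h), Or.inr (Or.inr ⟨rfl, rfl⟩)⟩

end HalfLines

end SignArray

/-- If `A` is tristochastic with exactly two entries equal to `1/2` in every line and
all other entries zero, and some connected component of `G(A)` is bipartite, then `A`
is not a vertex: it is the midpoint of two distinct tristochastic arrays. -/
theorem stmt4 {n : ℕ} (A : Fin n → Fin n → Fin n → ℝ)
    (hA : Tristochastic A)
    (hzero : ∀ i j k, A i j k ≠ 1 / 2 → A i j k = 0)
    (htwo1 : ∀ i j, (Finset.univ.filter fun k => A i j k = 1 / 2).card = 2)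
    (htwo2 : ∀ i k, (Finset.univ.filter fun j => A i j k = 1 / 2).card = 2)
    (htwo3 : ∀ j k, (Finset.univ.filter fun i => A i j k = 1 / 2).card = 2)
    (hbip : ∃ c : (lineGraph A).ConnectedComponent,
      (SimpleGraph.induce {v | (lineGraph A).connectedComponentMk v = c}
        (lineGraph A)).Colorable 2) :
    ∃ X Y : Fin n → Fin n → Fin n → ℝ, Tristochastic X ∧ Tristochastic Y ∧ X ≠ Y ∧
      ∀ i j k, A i j k = (X i j k + Y i j k) / 2 := by
  obtain ⟨c, ⟨col⟩⟩ := hbip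
  set D := (1 / 2 : ℝ) • signArray c col
  have hD : HasZeroLineSums D :=
    (signArray_hasZeroLineSums c col hzero htwo1 htwo2 htwo3).smul _
  have hle : ∀ i j k, |D i j k| ≤ A i j k := fun i j k => by
    simp only [D, Pi.smul_apply, smul_eq_mul, abs_mul]
    linarith [abs_signArray_le_two_mul c col hzero i j k, abs_of_pos (one_half_pos (α := ℝ))]
  have hD_ne : D ≠ 0 := smul_ne_zero (by norm_num) (signArray_ne_zero c col)
  refine ⟨A + D, A - D, hA.add_of_abs_le hD hle, hA.sub_of_abs_le hD hle, ?_, fun i j k => ?_⟩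
  · simpa [sub_eq_add_neg, self_eq_neg] using hD_ne
  · simp only [Pi.add_apply, Pi.sub_apply]; ring
end

section
/- Let n be even, let A and B be Latin squares of order n/2, and let σ be a cyclic permutation of {1,...,n/2}. Then the n × n block matrix X = [[A, B],[σ(A), B]] (where σ(A) applies σ to the rows of A) is a Hamiltonian double Latin square: every symbol k ∈ {1,...,n/2} appears exactly twice in each row and column of X, and for each k the set of positions of the k-entries of X forms an H-cycle. -/
/-- A set `S` of positions (in a square array indexed by `α`, with `|α| = n`) is an
H-cycle if for some bijective enumerations `I J : ZMod n → α` it equals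
`{(i₁,j₁),(i₂,j₁),(i₂,j₂),…,(iₙ,jₙ),(i₁,jₙ)}`. -/
def IsHCycle {α : Type*} (n : ℕ) (S : Set (α × α)) : Prop :=
  ∃ I J : ZMod n → α, Function.Bijective I ∧ Function.Bijective J ∧
    S = {p | ∃ a : ZMod n, p = (I a, J a) ∨ p = (I (a + 1), J a)}

/-- A Latin square of order `m`: each symbol occurs exactly once in every row and column. -/
def IsLatin {m : ℕ} (A : Fin m → Fin m → Fin m) : Prop :=
  (∀ i, Function.Bijective (A i)) ∧ (∀ j, Function.Bijective fun i => A i j)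

/-! Order the rows of `X` cyclically as `…, top i, bottom i, top (σ i), bottom (σ i), …`; since
`σ` is a single cycle, this permutation `ρ` of the rows is a single cycle of length `2m`. In
row `top i` the symbol `k` sits in the `A`-column `a i` and the `B`-column `b i` (where
`A i (a i) = B i (b i) = k`), in row `bottom i` in the columns `a (σ i)` and `b i`. So the rows
`top i, bottom i` share the column `b i` and the rows `bottom i, top (σ i)` share the column
`a (σ i)`: the `k`-cells are `{(r, J r), (ρ r, J r)}` for a bijection `J` from rows to columns,
which is an H-cycle traversed along `ρ`, with two cells in every row and every column. -/

open Finset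

namespace Equiv.Perm

variable {α : Type*}

theorem IsCycleOn.exists_zmod_equiv [Fintype α] [Nonempty α] {f : Perm α}
    (hf : f.IsCycleOn _root_.Set.univ) :
    ∃ e : ZMod (Fintype.card α) ≃ α, ∀ a, e (a + 1) = f (e a) := by
  have : NeZero (Fintype.card α) := ⟨Fintype.card_ne_zero⟩
  obtain ⟨x₀⟩ := ‹Nonempty α›
  have hf' : f.IsCycleOn (univ : Finset α) := by rwa [coe_univ]
  have hpow : ∀ u v : ℕ, (f ^ u) x₀ = (f ^ v) x₀ ↔ (u : ZMod (Fintype.card α)) = v := by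
    intro u v
    rw [hf'.pow_apply_eq_pow_apply (mem_univ x₀), card_univ, ZMod.natCast_eq_natCast_iff]
  have hinj : Function.Injective fun a : ZMod (Fintype.card α) => (f ^ a.val) x₀ :=
    fun a b h => by simpa using (hpow _ _).1 h
  refine ⟨Equiv.ofBijective _ ((Fintype.bijective_iff_injective_and_card _).2
    ⟨hinj, ZMod.card _⟩), fun a => ?_⟩
  simp only [Equiv.ofBijective_apply, ← mul_apply, ← pow_succ']
  rw [hpow]
  push_cast
  simp

def interleave (σ : Perm α) : Perm (α ⊕ α) :=
  (Equiv.sumComm α α).trans (Equiv.sumCongr σ (Equiv.refl α))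

@[simp]
theorem interleave_inl (σ : Perm α) (i : α) : σ.interleave (.inl i) = .inr i := rfl

@[simp]
theorem interleave_inr (σ : Perm α) (i : α) : σ.interleave (.inr i) = .inl (σ i) := rfl

@[simp]
theorem interleave_symm_inl (σ : Perm α) (i : α) :
    σ.interleave.symm (.inl i) = .inr (σ.symm i) := rfl

@[simp]
theorem interleave_symm_inr (σ : Perm α) (i : α) : σ.interleave.symm (.inr i) = .inl i := rfl

theorem interleave_apply_ne (σ : Perm α) (x : α ⊕ α) : σ.interleave x ≠ x := by
  cases x <;> simp

theorem interleave_sq (σ : Perm α) : σ.interleave ^ 2 = sumCongr σ σ := by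
  ext (i | i) <;> simp [sq]

theorem IsCycleOn.interleave {σ : Perm α} (hσ : σ.IsCycleOn _root_.Set.univ) :
    σ.interleave.IsCycleOn _root_.Set.univ := by
  refine ⟨σ.interleave.bijective.bijOn_univ, ?_⟩
  have hinl : ∀ i j, σ.interleave.SameCycle (.inl i) (.inl j) := fun i j => by
    obtain ⟨t, rfl⟩ := hσ.2 (Set.mem_univ i) (Set.mem_univ j)
    refine SameCycle.of_pow (n := 2) ⟨t, ?_⟩
    rw [interleave_sq]
    show (sumCongrHom α α (σ, σ) ^ t) (.inl i) = _
    rw [← map_zpow]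
    rfl
  have hstep : ∀ i, σ.interleave.SameCycle (.inl i) (.inr i) := fun i => ⟨1, rfl⟩
  rintro (i | i) - (j | j) -
  · exact hinl i j
  · exact (hinl i j).trans (hstep j)
  · exact (hstep i).symm.trans (hinl i j)
  · exact (hstep i).symm.trans ((hinl i j).trans (hstep j))

end Equiv.Perm

variable {α β : Type*}

theorem isHCycle_of_isCycleOn [Fintype α] [Nonempty α] {ρ : Equiv.Perm α}
    (hρ : ρ.IsCycleOn Set.univ) (J : Equiv.Perm α) :
    IsHCycle (Fintype.card α) {p : α × α | p.2 = J p.1 ∨ p.2 = J (ρ.symm p.1)} := by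
  obtain ⟨e, he⟩ := hρ.exists_zmod_equiv
  refine ⟨e, J ∘ e, e.bijective, J.bijective.comp e.bijective, ?_⟩
  ext ⟨r, c⟩
  simp only [Set.mem_ofPred_eq, Prod.mk.injEq, Function.comp_apply, he]
  constructor
  · rintro (rfl | rfl)
    · exact ⟨e.symm r, .inl (by simp)⟩
    · exact ⟨e.symm (ρ.symm r), .inr (by simp)⟩
  · rintro ⟨a, ⟨rfl, rfl⟩ | ⟨rfl, rfl⟩⟩
    · exact .inl rfl
    · exact .inr (by simp)

theorem card_row_eq_two [Fintype β] [DecidableEq β] {ρ : Equiv.Perm α} (hρ : ∀ x, ρ x ≠ x)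
    (J : α ≃ β) (r : α) :
    #{c | c = J r ∨ c = J (ρ.symm r)} = 2 := by
  rw [card_eq_two]
  refine ⟨J r, J (ρ.symm r), J.injective.ne (by simpa [eq_comm] using hρ (ρ.symm r)), ?_⟩
  ext c
  simp

theorem card_column_eq_two [Fintype α] [DecidableEq α] [DecidableEq β] {ρ : Equiv.Perm α}
    (hρ : ∀ x, ρ x ≠ x) (J : α ≃ β) (c : β) :
    #{r | c = J r ∨ c = J (ρ.symm r)} = 2 := by
  rw [card_eq_two]
  refine ⟨J.symm c, ρ (J.symm c), (hρ _).symm, ?_⟩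
  ext r
  simp only [mem_filter, mem_univ, true_and, mem_insert, mem_singleton, ← J.symm_apply_eq,
    ρ.eq_symm_apply, eq_comm]

namespace IsLatin

variable {m : ℕ} {A : Fin m → Fin m → Fin m}

noncomputable def colOf (hA : IsLatin A) (k i : Fin m) : Fin m :=
  (Equiv.ofBijective (A i) (hA.1 i)).symm k

theorem apply_eq_iff (hA : IsLatin A) {k i j : Fin m} : A i j = k ↔ j = hA.colOf k i :=
  (Equiv.ofBijective (A i) (hA.1 i)).eq_symm_apply.symm

theorem colOf_bijective (hA : IsLatin A) (k : Fin m) : Function.Bijective (hA.colOf k) :=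
  Finite.injective_iff_bijective.1 fun i _ h =>
    (hA.2 (hA.colOf k i)).1 ((hA.apply_eq_iff.2 rfl).trans (hA.apply_eq_iff.2 h).symm)

end IsLatin

/-- For Latin squares `A`, `B` of order `m = n/2` and a cyclic permutation `σ` of `[m]`,
the block matrix `X = [[A, B], [σ(A), B]]` is a Hamiltonian double Latin square: every
symbol appears exactly twice in each row and column, and the positions of each symbol
form an H-cycle. -/
theorem stmt6 {m : ℕ} (A B : Fin m → Fin m → Fin m)
    (hA : IsLatin A) (hB : IsLatin B) (σ : Equiv.Perm (Fin m))
    (hσ : σ.IsCycle ∧ σ.support = Finset.univ) :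
    let X : Fin m ⊕ Fin m → Fin m ⊕ Fin m → Fin m := fun r c =>
      match r, c with
      | .inl i, .inl j => A i j
      | .inl i, .inr j => B i j
      | .inr i, .inl j => A (σ i) j
      | .inr i, .inr j => B i j
    (∀ r k, (Finset.univ.filter fun c => X r c = k).card = 2) ∧
    (∀ c k, (Finset.univ.filter fun r => X r c = k).card = 2) ∧
    (∀ k, IsHCycle (2 * m) {p : (Fin m ⊕ Fin m) × (Fin m ⊕ Fin m) | X p.1 p.2 = k}) := by
  intro X
  have hcells : ∀ k, ∃ J : Equiv.Perm (Fin m ⊕ Fin m),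
      ∀ r c, X r c = k ↔ c = J r ∨ c = J (σ.interleave.symm r) := fun k =>
    ⟨(Equiv.sumCongr (.ofBijective _ (hB.colOf_bijective k))
        (σ.trans (.ofBijective _ (hA.colOf_bijective k)))).trans (Equiv.sumComm _ _),
      by rintro (i | i) (j | j) <;> simp [X, hA.apply_eq_iff, hB.apply_eq_iff]⟩
  refine ⟨fun r k => ?_, fun c k => ?_, fun k => ?_⟩ <;> obtain ⟨J, hJ⟩ := hcells k
  · simpa only [hJ] using card_row_eq_two σ.interleave_apply_ne J r
  · simpa only [hJ] using card_column_eq_two σ.interleave_apply_ne J c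
  · have : Nonempty (Fin m) := ⟨k⟩
    have hσ' : σ.IsCycleOn Set.univ := by
      simpa [← Equiv.Perm.coe_support_eq_set_support, hσ.2] using hσ.1.isCycleOn
    have hcard : Fintype.card (Fin m ⊕ Fin m) = 2 * m := by simp [two_mul]
    have hS : {p : (Fin m ⊕ Fin m) × (Fin m ⊕ Fin m) | X p.1 p.2 = k} =
        {p | p.2 = J p.1 ∨ p.2 = J (σ.interleave.symm p.1)} := Set.ext fun p => hJ p.1 p.2
    rw [← hcard, hS]
    exact isHCycle_of_isCycleOn hσ'.interleave J
end

section
/- Let G be an (n−2)-regular bipartite graph with both sides of size n, where n ≥ 6, and let M be a path with 4 vertices (3 edges) in G. Then G has a 2-factor (a spanning 2-regular subgraph) containing all three edges of M. -/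
/-- Degree of left vertex `i` in a bipartite graph given by its edge set. -/
def rowDeg {n : ℕ} (E : Finset (Fin n × Fin n)) (i : Fin n) : ℕ :=
  (E.filter fun p => p.1 = i).card

/-- Degree of right vertex `j` in a bipartite graph given by its edge set. -/
def colDeg {n : ℕ} (E : Finset (Fin n × Fin n)) (j : Fin n) : ℕ :=
  (E.filter fun p => p.2 = j).card

namespace Stmt8Aux
variable {n : ℕ}

def rowN (E : Finset (Fin n × Fin n)) (i : Fin n) : Finset (Fin n) :=
  (E.filter fun p => p.1 = i).image Prod.snd

def colN (E : Finset (Fin n × Fin n)) (j : Fin n) : Finset (Fin n) :=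
  (E.filter fun p => p.2 = j).image Prod.fst

lemma mem_rowN {E : Finset (Fin n × Fin n)} {i j : Fin n} : j ∈ rowN E i ↔ (i, j) ∈ E := by
  constructor
  · intro h
    simp only [rowN, Finset.mem_image, Finset.mem_filter] at h
    obtain ⟨p, ⟨hp, h1⟩, h2⟩ := h
    rwa [show (i, j) = p by ext <;> simp [h1, h2]]
  · intro h
    simp only [rowN, Finset.mem_image, Finset.mem_filter]
    exact ⟨(i, j), ⟨h, rfl⟩, rfl⟩

lemma mem_colN {E : Finset (Fin n × Fin n)} {i j : Fin n} : i ∈ colN E j ↔ (i, j) ∈ E := by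
  constructor
  · intro h
    simp only [colN, Finset.mem_image, Finset.mem_filter] at h
    obtain ⟨p, ⟨hp, h1⟩, h2⟩ := h
    rwa [show (i, j) = p by ext <;> simp [h1, h2]]
  · intro h
    simp only [colN, Finset.mem_image, Finset.mem_filter]
    exact ⟨(i, j), ⟨h, rfl⟩, rfl⟩

lemma card_rowN (E : Finset (Fin n × Fin n)) (i : Fin n) : (rowN E i).card = rowDeg E i := by
  refine Finset.card_image_of_injOn ?_
  rintro ⟨x1, x2⟩ hx ⟨y1, y2⟩ hy h
  simp only [Finset.mem_coe, Finset.mem_filter] at hx hy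
  simp only at h
  ext <;> simp [hx.2, hy.2, h]

lemma card_colN (E : Finset (Fin n × Fin n)) (j : Fin n) : (colN E j).card = colDeg E j := by
  refine Finset.card_image_of_injOn ?_
  rintro ⟨x1, x2⟩ hx ⟨y1, y2⟩ hy h
  simp only [Finset.mem_coe, Finset.mem_filter] at hx hy
  simp only at h
  ext <;> simp [hx.2, hy.2, h]

lemma exists_sigma (hn : 6 ≤ n) (E : Finset (Fin n × Fin n))
    (hr : ∀ i, rowDeg E i = n - 2) (hc : ∀ j, colDeg E j = n - 2)
    {a c b d : Fin n} (hac : a ≠ c) (hbd : b ≠ d)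
    (h1 : (a, b) ∈ E) (h3 : (c, d) ∈ E) :
    ∃ σ : Fin n → Fin n, Function.Injective σ ∧ (∀ i, (i, σ i) ∈ E) ∧ σ a = b ∧ σ c = d := by
  classical
  set t1 : Fin n → Finset (Fin n) :=
    fun i => if i = a then {b} else if i = c then {d} else (rowN E i) \ {b, d} with ht1
  have hrowcard : ∀ i, (rowN E i).card = n - 2 := fun i => by rw [card_rowN, hr]
  have hcolcard : ∀ j, (colN E j).card = n - 2 := fun j => by rw [card_colN, hc]
  have hcard_t1 : ∀ i, i ≠ a → i ≠ c → n - 4 ≤ (t1 i).card := by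
    intro i hia hic
    have h2' : (rowN E i).card - ({b, d} : Finset (Fin n)).card
        ≤ ((rowN E i) \ {b, d}).card := Finset.le_card_sdiff _ _
    rw [hrowcard, Finset.card_pair hbd] at h2'
    simp only [ht1, if_neg hia, if_neg hic]
    omega
  have hall : ∀ S : Finset (Fin n), S.card ≤ (S.biUnion t1).card := by
    intro S
    set S2 := S ∩ {a, c} with hS2
    set S1 := S \ {a, c} with hS1
    have hsplit : S2 ∪ S1 = S := by
      ext x; simp only [hS2, hS1, Finset.mem_union, Finset.mem_inter, Finset.mem_sdiff]; tauto
    have hmemS1 : ∀ i ∈ S1, i ≠ a ∧ i ≠ c := by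
      intro i hi
      have := (Finset.mem_sdiff.mp hi).2
      simp only [Finset.mem_insert, Finset.mem_singleton] at this
      tauto
    have hb2 : S2.biUnion t1 ⊆ {b, d} := by
      intro j hj
      obtain ⟨i, hiS2, hji⟩ := Finset.mem_biUnion.mp hj
      have hi : i = a ∨ i = c := by
        have := (Finset.mem_inter.mp hiS2).2
        simpa using this
      simp only [ht1] at hji
      split_ifs at hji with h1' h2'
      · simp only [Finset.mem_singleton] at hji; simp [hji]
      · simp only [Finset.mem_singleton] at hji; simp [hji]
      · tauto
    have hb1 : ∀ j ∈ S1.biUnion t1, j ∉ ({b, d} : Finset (Fin n)) := by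
      intro j hj
      obtain ⟨i, hiS1, hji⟩ := Finset.mem_biUnion.mp hj
      obtain ⟨hia, hic⟩ := hmemS1 i hiS1
      simp only [ht1, if_neg hia, if_neg hic, Finset.mem_sdiff] at hji
      exact hji.2
    have hdisjB : Disjoint (S2.biUnion t1) (S1.biUnion t1) := by
      rw [Finset.disjoint_right]
      intro j hj1 hj2
      exact hb1 j hj1 (hb2 hj2)
    have hkey2 : S2.card ≤ (S2.biUnion t1).card := by
      refine Finset.card_le_card_biUnion ?_ ?_
      · intro i hi j hj hij
        have hta : t1 a = {b} := by simp [ht1]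
        have htc : t1 c = {d} := by simp [ht1, Ne.symm hac]
        have hi' : i = a ∨ i = c := by
          simpa using (Finset.mem_inter.mp (Finset.mem_coe.mp hi)).2
        have hj' : j = a ∨ j = c := by
          simpa using (Finset.mem_inter.mp (Finset.mem_coe.mp hj)).2
        have hcase : (t1 i = {b} ∧ t1 j = {d}) ∨ (t1 i = {d} ∧ t1 j = {b}) := by
          rcases hi' with h | h <;> rcases hj' with h' | h'
          · exact absurd (h.trans h'.symm) hij
          · exact Or.inl ⟨by rw [h, hta], by rw [h', htc]⟩
          · exact Or.inr ⟨by rw [h, htc], by rw [h', hta]⟩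
          · exact absurd (h.trans h'.symm) hij
        show Disjoint (t1 i) (t1 j)
        rcases hcase with ⟨e1, e2⟩ | ⟨e1, e2⟩ <;> rw [e1, e2] <;>
          simp [Finset.disjoint_singleton, hbd, hbd.symm]
      · intro i hi
        have hi' : i = a ∨ i = c := by
          have := (Finset.mem_inter.mp hi).2; simpa using this
        rcases hi' with rfl | rfl
        · simp [ht1]
        · simp [ht1, Ne.symm hac]
    have hS1sub : S1 ⊆ Finset.univ \ {a, c} := by
      intro i hi
      obtain ⟨hia, hic⟩ := hmemS1 i hi
      simp [hia, hic]
    have hUcard : (Finset.univ \ ({a, c} : Finset (Fin n))).card = n - 2 := by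
      rw [Finset.card_sdiff_of_subset (Finset.subset_univ _), Finset.card_univ, Fintype.card_fin,
        Finset.card_pair hac]
    have hS1card : S1.card ≤ n - 2 := by
      have := Finset.card_le_card hS1sub
      omega
    have hkey1 : S1.card ≤ (S1.biUnion t1).card := by
      rcases S1.eq_empty_or_nonempty with h | ⟨i₀, hi₀⟩
      · simp [h]
      obtain ⟨hi₀a, hi₀c⟩ := hmemS1 i₀ hi₀
      by_cases hsmall : S1.card ≤ n - 4
      · calc S1.card ≤ n - 4 := hsmall
          _ ≤ (t1 i₀).card := hcard_t1 i₀ hi₀a hi₀c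
          _ ≤ (S1.biUnion t1).card :=
            Finset.card_le_card (Finset.subset_biUnion_of_mem t1 hi₀)
      · have hsbig : n - 3 ≤ S1.card := by omega
        have hsub2 : (Finset.univ \ ({b, d} : Finset (Fin n))) ⊆ S1.biUnion t1 := by
          intro j hj
          have hj' : j ≠ b ∧ j ≠ d := by
            have := (Finset.mem_sdiff.mp hj).2
            simp only [Finset.mem_insert, Finset.mem_singleton] at this
            tauto
          have hAcard : n - 4 ≤ ((colN E j) \ {a, c}).card := by
            have := Finset.le_card_sdiff ({a, c} : Finset (Fin n)) (colN E j)
            rw [hcolcard, Finset.card_pair hac] at this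
            omega
          have hAsub : (colN E j) \ {a, c} ⊆ Finset.univ \ {a, c} := by
            intro i hi
            exact Finset.mem_sdiff.mpr ⟨Finset.mem_univ _, (Finset.mem_sdiff.mp hi).2⟩
          have hne : (((colN E j) \ {a, c}) ∩ S1).Nonempty := by
            refine Finset.inter_nonempty_of_card_lt_card_add_card hAsub hS1sub ?_
            omega
          obtain ⟨i, hi⟩ := hne
          rw [Finset.mem_inter] at hi
          obtain ⟨hiA, hiS1⟩ := hi
          obtain ⟨hia, hic⟩ := hmemS1 i hiS1
          refine Finset.mem_biUnion.mpr ⟨i, hiS1, ?_⟩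
          simp only [ht1, if_neg hia, if_neg hic]
          refine Finset.mem_sdiff.mpr ⟨mem_rowN.mpr (mem_colN.mp (Finset.mem_sdiff.mp hiA).1), ?_⟩
          simp [hj'.1, hj'.2]
        have hVcard : (Finset.univ \ ({b, d} : Finset (Fin n))).card = n - 2 := by
          rw [Finset.card_sdiff_of_subset (Finset.subset_univ _), Finset.card_univ, Fintype.card_fin,
            Finset.card_pair hbd]
        have := Finset.card_le_card hsub2
        omega
    calc S.card = S2.card + S1.card := (Finset.card_inter_add_card_sdiff S {a, c}).symm
      _ ≤ (S2.biUnion t1).card + (S1.biUnion t1).card := Nat.add_le_add hkey2 hkey1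
      _ = ((S2.biUnion t1) ∪ (S1.biUnion t1)).card := (Finset.card_union_of_disjoint hdisjB).symm
      _ = (S.biUnion t1).card := by
          congr 1
          rw [← hsplit]
          ext x
          constructor
          · intro h
            rcases Finset.mem_union.mp h with h' | h' <;>
              obtain ⟨i, hi, hx⟩ := Finset.mem_biUnion.mp h'
            · exact Finset.mem_biUnion.mpr ⟨i, Finset.mem_union_left _ hi, hx⟩
            · exact Finset.mem_biUnion.mpr ⟨i, Finset.mem_union_right _ hi, hx⟩
          · intro h
            obtain ⟨i, hi, hx⟩ := Finset.mem_biUnion.mp h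
            rcases Finset.mem_union.mp hi with h' | h'
            · exact Finset.mem_union_left _ (Finset.mem_biUnion.mpr ⟨i, h', hx⟩)
            · exact Finset.mem_union_right _ (Finset.mem_biUnion.mpr ⟨i, h', hx⟩)
  obtain ⟨σ, hinj, hmem⟩ := (Finset.all_card_le_biUnion_card_iff_exists_injective t1).mp hall
  have hσa : σ a = b := by
    have := hmem a
    simpa [ht1] using this
  have hσc : σ c = d := by
    have := hmem c
    simpa [ht1, Ne.symm hac] using this
  refine ⟨σ, hinj, ?_, hσa, hσc⟩
  intro i
  by_cases hia : i = a
  · subst hia; rw [hσa]; exact h1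
  by_cases hic : i = c
  · subst hic; rw [hσc]; exact h3
  have := hmem i
  simp only [ht1, if_neg hia, if_neg hic, Finset.mem_sdiff] at this
  exact mem_rowN.mp this.1

lemma exists_tau (hn : 6 ≤ n) (E : Finset (Fin n × Fin n))
    (hr : ∀ i, rowDeg E i = n - 2) (hc : ∀ j, colDeg E j = n - 2)
    {a c b d : Fin n} (hac : a ≠ c) (hbd : b ≠ d)
    (h2 : (c, b) ∈ E)
    (σ : Fin n → Fin n) (hσinj : Function.Injective σ) (hσE : ∀ i, (i, σ i) ∈ E)
    (hσa : σ a = b) (hσc : σ c = d) :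
    ∃ τ : Fin n → Fin n, Function.Injective τ ∧ (∀ i, (i, τ i) ∈ E) ∧ τ c = b ∧
      ∀ i, τ i ≠ σ i := by
  classical
  have h1' : (a, b) ∈ E := by have := hσE a; rwa [hσa] at this
  set t2 : Fin n → Finset (Fin n) :=
    fun i => if i = c then {b} else ((rowN E i).erase (σ i)).erase b with ht2
  have hrowcard : ∀ i, (rowN E i).card = n - 2 := fun i => by rw [card_rowN, hr]
  have hcolcard : ∀ j, (colN E j).card = n - 2 := fun j => by rw [card_colN, hc]
  have hcard_t2 : ∀ i, i ≠ c → n - 4 ≤ (t2 i).card := by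
    intro i hic
    simp only [ht2, if_neg hic]
    have e1 : (rowN E i).card - 1 ≤ ((rowN E i).erase (σ i)).card :=
      Finset.pred_card_le_card_erase
    have e2 : ((rowN E i).erase (σ i)).card - 1 ≤ (((rowN E i).erase (σ i)).erase b).card :=
      Finset.pred_card_le_card_erase
    have := hrowcard i
    omega
  have hall : ∀ S : Finset (Fin n), S.card ≤ (S.biUnion t2).card := by
    intro S
    set S2 := S ∩ {c} with hS2
    set S1 := S \ {c} with hS1
    have hsplit : S2 ∪ S1 = S := by
      ext x; simp only [hS2, hS1, Finset.mem_union, Finset.mem_inter, Finset.mem_sdiff]; tauto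
    have hmemS1 : ∀ i ∈ S1, i ≠ c := by
      intro i hi
      have := (Finset.mem_sdiff.mp hi).2
      simpa using this
    have hb2 : S2.biUnion t2 ⊆ {b} := by
      intro j hj
      obtain ⟨i, hiS2, hji⟩ := Finset.mem_biUnion.mp hj
      have hi : i = c := by simpa using (Finset.mem_inter.mp hiS2).2
      simp only [ht2, if_pos hi] at hji
      exact hji
    have hb1 : ∀ j ∈ S1.biUnion t2, j ∉ ({b} : Finset (Fin n)) := by
      intro j hj
      obtain ⟨i, hiS1, hji⟩ := Finset.mem_biUnion.mp hj
      simp only [ht2, if_neg (hmemS1 i hiS1), Finset.mem_erase] at hji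
      simp [hji.1]
    have hdisjB : Disjoint (S2.biUnion t2) (S1.biUnion t2) := by
      rw [Finset.disjoint_right]
      intro j hj1 hj2
      exact hb1 j hj1 (hb2 hj2)
    have hkey2 : S2.card ≤ (S2.biUnion t2).card := by
      refine Finset.card_le_card_biUnion ?_ ?_
      · intro i hi j hj hij
        have e1 : i = c := by simpa using (Finset.mem_inter.mp (Finset.mem_coe.mp hi)).2
        have e2 : j = c := by simpa using (Finset.mem_inter.mp (Finset.mem_coe.mp hj)).2
        exact absurd (e1.trans e2.symm) hij
      · intro i hi
        have e1 : i = c := by simpa using (Finset.mem_inter.mp hi).2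
        simp [ht2, e1]
    have hS1sub : S1 ⊆ Finset.univ.erase c := by
      intro i hi
      exact Finset.mem_erase.mpr ⟨hmemS1 i hi, Finset.mem_univ _⟩
    have hUcard : ((Finset.univ : Finset (Fin n)).erase c).card = n - 1 := by
      rw [Finset.card_erase_of_mem (Finset.mem_univ _), Finset.card_univ, Fintype.card_fin]
    have hS1card : S1.card ≤ n - 1 := by
      have := Finset.card_le_card hS1sub
      omega
    have hkey1 : S1.card ≤ (S1.biUnion t2).card := by
      rcases S1.eq_empty_or_nonempty with h | ⟨i₀, hi₀⟩
      · simp [h]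
      have hi₀c : i₀ ≠ c := hmemS1 i₀ hi₀
      by_cases hbig : n - 2 ≤ S1.card
      · have hsub2 : (Finset.univ : Finset (Fin n)).erase b ⊆ S1.biUnion t2 := by
          intro j hj
          have hjb : j ≠ b := Finset.ne_of_mem_erase hj
          set A := ((colN E j).erase c).filter (fun i => ¬σ i = j) with hA
          have hBcard : (((colN E j).erase c).filter (fun i => σ i = j)).card ≤ 1 := by
            refine Finset.card_le_one.mpr ?_
            intro i1 hi1 i2 hi2
            have e1 := (Finset.mem_filter.mp hi1).2
            have e2 := (Finset.mem_filter.mp hi2).2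
            exact hσinj (e1.trans e2.symm)
          have hEcard : n - 3 ≤ ((colN E j).erase c).card := by
            have := Finset.pred_card_le_card_erase (s := colN E j) (a := c)
            have := hcolcard j
            omega
          have hAcard : n - 4 ≤ A.card := by
            have hsum := Finset.card_filter_add_card_filter_not
              (s := (colN E j).erase c) (p := fun i => σ i = j)
            simp only [hA]
            omega
          have hAsub : A ⊆ Finset.univ.erase c := by
            intro i hi
            have := Finset.mem_erase.mp (Finset.mem_filter.mp (hA ▸ hi)).1
            exact Finset.mem_erase.mpr ⟨this.1, Finset.mem_univ _⟩
          have hne : (A ∩ S1).Nonempty := by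
            refine Finset.inter_nonempty_of_card_lt_card_add_card hAsub hS1sub ?_
            omega
          obtain ⟨i, hi⟩ := hne
          rw [Finset.mem_inter] at hi
          obtain ⟨hiA, hiS1⟩ := hi
          have hic : i ≠ c := hmemS1 i hiS1
          have hiA' := Finset.mem_filter.mp (hA ▸ hiA)
          have hiE : (i, j) ∈ E := mem_colN.mp (Finset.mem_of_mem_erase hiA'.1)
          refine Finset.mem_biUnion.mpr ⟨i, hiS1, ?_⟩
          simp only [ht2, if_neg hic]
          exact Finset.mem_erase.mpr ⟨hjb,
            Finset.mem_erase.mpr ⟨fun h => hiA'.2 h.symm, mem_rowN.mpr hiE⟩⟩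
        have hVcard : ((Finset.univ : Finset (Fin n)).erase b).card = n - 1 := by
          rw [Finset.card_erase_of_mem (Finset.mem_univ _), Finset.card_univ, Fintype.card_fin]
        have := Finset.card_le_card hsub2
        omega
      · by_cases hex : ∃ i ∈ S1, b ∉ (rowN E i).erase (σ i)
        · obtain ⟨i₁, hi₁S, hi₁b⟩ := hex
          have hi₁c : i₁ ≠ c := hmemS1 i₁ hi₁S
          have ht2i : t2 i₁ = (rowN E i₁).erase (σ i₁) := by
            simp only [ht2, if_neg hi₁c]
            exact Finset.erase_eq_of_notMem hi₁b
          have hcard : (t2 i₁).card = n - 3 := by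
            rw [ht2i, Finset.card_erase_of_mem (mem_rowN.mpr (hσE i₁)), hrowcard]
            omega
          calc S1.card ≤ n - 3 := by omega
            _ = (t2 i₁).card := hcard.symm
            _ ≤ (S1.biUnion t2).card :=
              Finset.card_le_card (Finset.subset_biUnion_of_mem t2 hi₁S)
        · push_neg at hex
          have hsub : S1 ⊆ ((colN E b).erase a).erase c := by
            intro i hi
            have hic : i ≠ c := hmemS1 i hi
            have hb := Finset.mem_erase.mp (hex i hi)
            have hia : i ≠ a := by
              intro h
              exact hb.1 (by rw [h, hσa])
            exact Finset.mem_erase.mpr ⟨hic,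
              Finset.mem_erase.mpr ⟨hia, mem_colN.mpr (mem_rowN.mp hb.2)⟩⟩
          have hccard : (((colN E b).erase a).erase c).card = n - 4 := by
            have hcmem : c ∈ (colN E b).erase a :=
              Finset.mem_erase.mpr ⟨Ne.symm hac, mem_colN.mpr h2⟩
            rw [Finset.card_erase_of_mem hcmem, Finset.card_erase_of_mem (mem_colN.mpr h1'),
              hcolcard]
            omega
          have hS1small : S1.card ≤ n - 4 := by
            have := Finset.card_le_card hsub
            omega
          calc S1.card ≤ n - 4 := hS1small
            _ ≤ (t2 i₀).card := hcard_t2 i₀ hi₀c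
            _ ≤ (S1.biUnion t2).card :=
              Finset.card_le_card (Finset.subset_biUnion_of_mem t2 hi₀)
    calc S.card = S2.card + S1.card := (Finset.card_inter_add_card_sdiff S {c}).symm
      _ ≤ (S2.biUnion t2).card + (S1.biUnion t2).card := Nat.add_le_add hkey2 hkey1
      _ = ((S2.biUnion t2) ∪ (S1.biUnion t2)).card := (Finset.card_union_of_disjoint hdisjB).symm
      _ = (S.biUnion t2).card := by
          congr 1
          rw [← hsplit]
          ext x
          constructor
          · intro h
            rcases Finset.mem_union.mp h with h' | h' <;>
              obtain ⟨i, hi, hx⟩ := Finset.mem_biUnion.mp h'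
            · exact Finset.mem_biUnion.mpr ⟨i, Finset.mem_union_left _ hi, hx⟩
            · exact Finset.mem_biUnion.mpr ⟨i, Finset.mem_union_right _ hi, hx⟩
          · intro h
            obtain ⟨i, hi, hx⟩ := Finset.mem_biUnion.mp h
            rcases Finset.mem_union.mp hi with h' | h'
            · exact Finset.mem_union_left _ (Finset.mem_biUnion.mpr ⟨i, h', hx⟩)
            · exact Finset.mem_union_right _ (Finset.mem_biUnion.mpr ⟨i, h', hx⟩)
  obtain ⟨τ, hinj, hmem⟩ := (Finset.all_card_le_biUnion_card_iff_exists_injective t2).mp hall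
  have hτc : τ c = b := by
    have := hmem c
    simpa [ht2] using this
  have hother : ∀ i, i ≠ c → τ i ∈ ((rowN E i).erase (σ i)).erase b := by
    intro i hic
    have := hmem i
    simpa only [ht2, if_neg hic] using this
  refine ⟨τ, hinj, ?_, hτc, ?_⟩
  · intro i
    by_cases hic : i = c
    · subst hic; rw [hτc]; exact h2
    · have := hother i hic
      exact mem_rowN.mp (Finset.mem_of_mem_erase (Finset.mem_of_mem_erase this))
  · intro i
    by_cases hic : i = c
    · subst hic; rw [hτc, hσc]; exact hbd
    · have := Finset.mem_erase.mp (Finset.mem_of_mem_erase (hother i hic))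
      exact this.1

end Stmt8Aux

open Stmt8Aux in
/-- In an `(n-2)`-regular bipartite graph with sides of size `n ≥ 6`, any path
`a - b - c - d` with `3` edges extends to a 2-factor containing those edges. -/
theorem stmt8 {n : ℕ} (hn : 6 ≤ n) (E : Finset (Fin n × Fin n))
    (hr : ∀ i, rowDeg E i = n - 2) (hc : ∀ j, colDeg E j = n - 2)
    (a c : Fin n) (b d : Fin n) (hac : a ≠ c) (hbd : b ≠ d)
    (h1 : (a, b) ∈ E) (h2 : (c, b) ∈ E) (h3 : (c, d) ∈ E) :
    ∃ F ⊆ E, (∀ i, rowDeg F i = 2) ∧ (∀ j, colDeg F j = 2) ∧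
      (a, b) ∈ F ∧ (c, b) ∈ F ∧ (c, d) ∈ F := by
  classical
  obtain ⟨σ, hσinj, hσE, hσa, hσc⟩ := exists_sigma hn E hr hc hac hbd h1 h3
  obtain ⟨τ, hτinj, hτE, hτc, hτσ⟩ := exists_tau hn E hr hc hac hbd h2 σ hσinj hσE hσa hσc
  set F := (Finset.univ.image fun i => (i, σ i)) ∪ (Finset.univ.image fun i => (i, τ i))
    with hF
  have hmemF : ∀ p : Fin n × Fin n, p ∈ F ↔ (p.2 = σ p.1 ∨ p.2 = τ p.1) := by
    intro p
    simp only [hF, Finset.mem_union, Finset.mem_image, Finset.mem_univ, true_and]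
    constructor
    · rintro (⟨i, hi⟩ | ⟨i, hi⟩)
      · rw [← hi]; left; rfl
      · rw [← hi]; right; rfl
    · rintro (h | h)
      · exact Or.inl ⟨p.1, by rw [← h]⟩
      · exact Or.inr ⟨p.1, by rw [← h]⟩
  have hFE : F ⊆ E := by
    intro p hp
    rcases (hmemF p).mp hp with h | h
    · have := hσE p.1; rw [← h] at this; exact this
    · have := hτE p.1; rw [← h] at this; exact this
  have hrow : ∀ i, rowDeg F i = 2 := by
    intro i
    have hfilter : F.filter (fun p => p.1 = i) = {(i, σ i), (i, τ i)} := by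
      ext p
      simp only [Finset.mem_filter, Finset.mem_insert, Finset.mem_singleton]
      constructor
      · rintro ⟨hp, rfl⟩
        rcases (hmemF p).mp hp with h | h
        · exact Or.inl (Prod.ext rfl h)
        · exact Or.inr (Prod.ext rfl h)
      · rintro (rfl | rfl)
        · exact ⟨(hmemF _).mpr (Or.inl rfl), rfl⟩
        · exact ⟨(hmemF _).mpr (Or.inr rfl), rfl⟩
    have hne : ((i, σ i) : Fin n × Fin n) ≠ (i, τ i) := by
      intro h
      exact hτσ i (congrArg Prod.snd h).symm
    rw [rowDeg, hfilter, Finset.card_insert_of_notMem (by simpa using hne),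
      Finset.card_singleton]
  have hσbij : Function.Bijective σ :=
    (Fintype.bijective_iff_injective_and_card σ).mpr ⟨hσinj, rfl⟩
  have hτbij : Function.Bijective τ :=
    (Fintype.bijective_iff_injective_and_card τ).mpr ⟨hτinj, rfl⟩
  have hcol : ∀ j, colDeg F j = 2 := by
    intro j
    obtain ⟨i1, hi1⟩ := hσbij.2 j
    obtain ⟨i2, hi2⟩ := hτbij.2 j
    have hne12 : i1 ≠ i2 := by
      intro h
      subst h
      exact hτσ i1 (hi2.trans hi1.symm)
    have hfilter : F.filter (fun p => p.2 = j) = {(i1, j), (i2, j)} := by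
      ext p
      simp only [Finset.mem_filter, Finset.mem_insert, Finset.mem_singleton]
      constructor
      · rintro ⟨hp, rfl⟩
        rcases (hmemF p).mp hp with h | h
        · exact Or.inl (Prod.ext (hσinj (h.symm.trans hi1.symm)) rfl)
        · exact Or.inr (Prod.ext (hτinj (h.symm.trans hi2.symm)) rfl)
      · rintro (rfl | rfl)
        · exact ⟨(hmemF _).mpr (Or.inl hi1.symm), rfl⟩
        · exact ⟨(hmemF _).mpr (Or.inr hi2.symm), rfl⟩
    have hne : ((i1, j) : Fin n × Fin n) ≠ (i2, j) := by
      intro h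
      exact hne12 (congrArg Prod.fst h)
    rw [colDeg, hfilter, Finset.card_insert_of_notMem (by simpa using hne),
      Finset.card_singleton]
  refine ⟨F, hFE, hrow, hcol, ?_, ?_, ?_⟩
  · exact (hmemF (a, b)).mpr (Or.inl hσa.symm)
  · exact (hmemF (c, b)).mpr (Or.inr hτc.symm)
  · exact (hmemF (c, d)).mpr (Or.inl hσc.symm)
end

section
/- The affine dimension of the polytope Ω⁽ᵈ⁾ₙ of (d+1)-stochastic arrays equals (n−1)^(d+1). Consequently every vertex of Ω⁽ᵈ⁾ₙ has at least (n−1)^(d+1) zero entries, i.e., support of size at most n^(d+1) − (n−1)^(d+1). -/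
/-- The polytope `Ω⁽ᵈ⁾ₙ` of `(d+1)`-stochastic arrays: nonnegative arrays on `[n]^(d+1)`
in which every line sums to 1. -/
def OmegaPoly (n d : ℕ) : Set ((Fin (d + 1) → Fin n) → ℝ) :=
  {A | (∀ x, 0 ≤ A x) ∧
    ∀ (t : Fin (d + 1)) (x : Fin (d + 1) → Fin n),
      ∑ v : Fin n, A (Function.update x t v) = 1}

open Finset


/-- The subspace of arrays in which every line sums to 0. -/
def lineKer (n d : ℕ) : Submodule ℝ ((Fin (d + 1) → Fin n) → ℝ) where
  carrier := {B | ∀ (t : Fin (d + 1)) (x : Fin (d + 1) → Fin n),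
      ∑ v : Fin n, B (Function.update x t v) = 0}
  add_mem' := by
    intro a b ha hb
    intro t x
    simp only [Pi.add_apply, Finset.sum_add_distrib, ha t x, hb t x, add_zero]
  zero_mem' := by intro t x; simp
  smul_mem' := by
    intro c a ha t x
    simp only [Pi.smul_apply, smul_eq_mul, ← Finset.mul_sum, ha t x, mul_zero]

lemma mem_lineKer {n d : ℕ} {B : (Fin (d + 1) → Fin n) → ℝ} :
    B ∈ lineKer n d ↔ ∀ (t : Fin (d + 1)) (x : Fin (d + 1) → Fin n),
      ∑ v : Fin n, B (Function.update x t v) = 0 := Iff.rfl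

lemma lineKer_eq_zero_of_res {n d : ℕ} (hn : 1 ≤ n) (B : (Fin (d + 1) → Fin n) → ℝ)
    (hB : B ∈ lineKer n d)
    (h0 : ∀ y : Fin (d + 1) → Fin (n - 1),
      B (fun i => Fin.castLE (Nat.sub_le n 1) (y i)) = 0) :
    B = 0 := by
  classical
  have key : ∀ k (x : Fin (d + 1) → Fin n),
      (Finset.univ.filter fun i => (x i).val = n - 1).card ≤ k → B x = 0 := by
    intro k
    induction k with
    | zero =>
      intro x hx
      have hxlt : ∀ i, (x i).val < n - 1 := by
        intro i
        have h1 : (x i).val < n := (x i).isLt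
        have h2 : ¬ (x i).val = n - 1 := by
          intro h
          have : i ∈ Finset.univ.filter fun i => (x i).val = n - 1 := by simp [h]
          rw [Finset.card_eq_zero.mp (Nat.le_zero.mp hx)] at this
          exact absurd this (Finset.notMem_empty i)
        omega
      have hx' : (fun i => Fin.castLE (Nat.sub_le n 1) (⟨(x i).val, hxlt i⟩ : Fin (n-1))) = x := by
        funext i; exact Fin.ext rfl
      have := h0 (fun i => ⟨(x i).val, hxlt i⟩)
      rwa [hx'] at this
    | succ k ih =>
      intro x hx
      by_cases hc : (Finset.univ.filter fun i => (x i).val = n - 1).card ≤ k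
      · exact ih x hc
      · have hne : (Finset.univ.filter fun i => (x i).val = n - 1).Nonempty := by
          rw [← Finset.card_pos]; omega
        obtain ⟨i, hi⟩ := hne
        have hi' : (x i).val = n - 1 := by simpa using hi
        set top : Fin n := ⟨n - 1, by omega⟩ with htop
        have hxi : x i = top := Fin.ext hi'
        have hsum := hB i x
        rw [← Finset.add_sum_erase _ _ (Finset.mem_univ top)] at hsum
        have hrest : ∀ v ∈ Finset.univ.erase top, B (Function.update x i v) = 0 := by
          intro v hv
          have hvne : v ≠ top := (Finset.mem_erase.mp hv).1
          apply ih
          have hsub : (Finset.univ.filter fun j => ((Function.update x i v) j).val = n - 1)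
              ⊆ (Finset.univ.filter fun j => (x j).val = n - 1).erase i := by
            intro j hj
            simp only [Finset.mem_filter, Finset.mem_univ, true_and] at hj
            rcases eq_or_ne j i with rfl | hji
            · rw [Function.update_self] at hj
              exact absurd (Fin.ext hj : v = top) hvne
            · rw [Function.update_of_ne hji] at hj
              exact Finset.mem_erase.mpr ⟨hji, by simp [hj]⟩
          have := Finset.card_le_card hsub
          have hce : ((Finset.univ.filter fun j => (x j).val = n - 1).erase i).card
              = (Finset.univ.filter fun j => (x j).val = n - 1).card - 1 :=
            Finset.card_erase_of_mem hi
          omega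
        rw [Finset.sum_eq_zero hrest, add_zero] at hsum
        have : Function.update x i top = x := by rw [← hxi]; exact Function.update_eq_self i x
        rwa [this] at hsum
  funext x
  exact key _ x le_rfl
open Finset

noncomputable def wfun (n : ℕ) (a : Fin n) (b : Fin (n - 1)) : ℝ :=
  if a.val = b.val then 1 else if a.val = n - 1 then -1 else 0

lemma sum_wfun {n : ℕ} (hn : 1 ≤ n) (b : Fin (n - 1)) : ∑ a : Fin n, wfun n a b = 0 := by
  have hb : b.val < n - 1 := b.isLt
  have hpt : ∀ a : Fin n, wfun n a b =
      (if a = (⟨b.val, by omega⟩ : Fin n) then (1 : ℝ) else 0)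
        + (if a = (⟨n - 1, by omega⟩ : Fin n) then -1 else 0) := by
    intro a
    simp only [wfun, Fin.ext_iff]
    split_ifs <;> simp_all <;> omega
  rw [Finset.sum_congr rfl (fun a _ => hpt a), Finset.sum_add_distrib]
  simp only [Finset.sum_ite_eq', Finset.mem_univ, if_true]
  norm_num

lemma lineKer_surj {n d : ℕ} (hn : 1 ≤ n) (C : (Fin (d + 1) → Fin (n - 1)) → ℝ) :
    ∃ B : (Fin (d + 1) → Fin n) → ℝ, (∀ (t : Fin (d + 1)) (x : Fin (d + 1) → Fin n),
        ∑ v : Fin n, B (Function.update x t v) = 0) ∧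
      ∀ y, B (fun i => Fin.castLE (Nat.sub_le n 1) (y i)) = C y := by
  classical
  refine ⟨fun x => ∑ y : Fin (d + 1) → Fin (n - 1), (∏ i, wfun n (x i) (y i)) * C y, ?_, ?_⟩
  · intro t x
    rw [Finset.sum_comm]
    refine Finset.sum_eq_zero fun y _ => ?_
    have hprod : ∀ v : Fin n, (∏ i, wfun n ((Function.update x t v) i) (y i))
        = wfun n v (y t) * ∏ i ∈ ({t}ᶜ : Finset (Fin (d + 1))), wfun n (x i) (y i) := by
      intro v
      rw [Fintype.prod_eq_mul_prod_compl t]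
      congr 1
      · rw [Function.update_self]
      · refine Finset.prod_congr rfl fun j hj => ?_
        rw [Function.update_of_ne (by simpa using hj)]
    calc ∑ v : Fin n, (∏ i, wfun n ((Function.update x t v) i) (y i)) * C y
        = (∑ v : Fin n, wfun n v (y t)) * ((∏ i ∈ ({t}ᶜ : Finset (Fin (d + 1))),
            wfun n (x i) (y i)) * C y) := by
          rw [Finset.sum_mul]
          refine Finset.sum_congr rfl fun v _ => ?_
          rw [hprod v, mul_assoc]
      _ = 0 := by rw [sum_wfun hn, zero_mul]
  · intro y₀
    have hpt : ∀ y : Fin (d + 1) → Fin (n - 1),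
        (∏ i, wfun n (Fin.castLE (Nat.sub_le n 1) (y₀ i)) (y i)) * C y
          = (if y = y₀ then 1 else 0) * C y := by
      intro y
      congr 1
      by_cases h : y = y₀
      · subst h
        rw [if_pos rfl]
        refine Finset.prod_eq_one fun i _ => ?_
        simp [wfun]
      · rw [if_neg h]
        obtain ⟨i, hi⟩ : ∃ i, y i ≠ y₀ i := by
          by_contra hc; push_neg at hc; exact h (funext hc)
        refine Finset.prod_eq_zero (Finset.mem_univ i) ?_
        have h1 : (y₀ i).val ≠ (y i).val := fun hh => hi (Fin.ext hh.symm)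
        have h2 : (y₀ i).val ≠ n - 1 := by have := (y₀ i).isLt; omega
        simp [wfun, h1, h2]
    show (∑ y : Fin (d + 1) → Fin (n - 1),
        (∏ i, wfun n (Fin.castLE (Nat.sub_le n 1) (y₀ i)) (y i)) * C y) = C y₀
    rw [Finset.sum_congr rfl (fun y _ => hpt y)]
    simp

noncomputable def resMap (n d : ℕ) :
    ↥(lineKer n d) →ₗ[ℝ] ((Fin (d + 1) → Fin (n - 1)) → ℝ) where
  toFun B := fun y => B.val (fun i => Fin.castLE (Nat.sub_le n 1) (y i))
  map_add' B C := rfl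
  map_smul' r B := rfl

lemma finrank_lineKer (n d : ℕ) (hn : 1 ≤ n) :
    Module.finrank ℝ ↥(lineKer n d) = (n - 1) ^ (d + 1) := by
  have hbij : Function.Bijective (resMap n d) := by
    constructor
    · intro B B' h
      apply Subtype.ext
      have hsub := lineKer_eq_zero_of_res hn (B.val - B'.val)
        (sub_mem B.2 B'.2) (fun y => by
          have := congrFun h y
          simpa [resMap, sub_eq_zero] using this)
      exact sub_eq_zero.mp hsub
    · intro C
      obtain ⟨B, hB, hres⟩ := lineKer_surj hn C
      exact ⟨⟨B, hB⟩, funext hres⟩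
  have e := LinearEquiv.ofBijective (resMap n d) hbij
  rw [e.finrank_eq, Module.finrank_fintype_fun_eq_card]
  simp

lemma direction_eq (n d : ℕ) (hn : 1 ≤ n) :
    (affineSpan ℝ (OmegaPoly n d)).direction = lineKer n d := by
  rw [direction_affineSpan]
  apply le_antisymm
  · rw [vectorSpan_def, Submodule.span_le]
    rintro p hp
    rw [Set.mem_vsub] at hp
    obtain ⟨A, hA, A', hA', rfl⟩ := hp
    rw [SetLike.mem_coe, mem_lineKer]
    intro t x
    have h1 := hA.2 t x
    have h2 := hA'.2 t x
    simp only [vsub_eq_sub, Pi.sub_apply, Finset.sum_sub_distrib, h1, h2, sub_self]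
  · intro B hB
    have hnpos : (0 : ℝ) < n := by exact_mod_cast hn
    set ε : ℝ := (1 / n) / (‖B‖ + 1) with hε
    have hεpos : 0 < ε := by positivity
    have hsum1 : ∀ (t : Fin (d+1)) (x : Fin (d+1) → Fin n),
        ∑ _v : Fin n, (1 : ℝ) / n = 1 := by
      intro t x
      rw [Finset.sum_const, Finset.card_univ, Fintype.card_fin, nsmul_eq_mul]
      field_simp
    have hmem1 : (fun _ => (1 : ℝ) / n) ∈ OmegaPoly n d := by
      refine ⟨fun x => by positivity, fun t x => hsum1 t x⟩
    have hεB : ε * ‖B‖ ≤ 1 / n := by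
      have hkey : ε * (‖B‖ + 1) = 1 / n := div_mul_cancel₀ _ (by positivity)
      nlinarith [hεpos]
    have hmem2 : ((fun _ => (1 : ℝ) / n) + ε • B) ∈ OmegaPoly n d := by
      constructor
      · intro x
        have h1 : |B x| ≤ ‖B‖ := by
          simpa [Real.norm_eq_abs] using norm_le_pi_norm B x
        simp only [Pi.add_apply, Pi.smul_apply, smul_eq_mul]
        have h2 : ε * |B x| ≤ ε * ‖B‖ := by gcongr
        have h3 := neg_abs_le (B x)
        nlinarith
      · intro t x
        simp only [Pi.add_apply, Pi.smul_apply, smul_eq_mul]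
        rw [Finset.sum_add_distrib, ← Finset.mul_sum, hB t x, mul_zero, add_zero]
        exact hsum1 t x
    have hv : ((fun _ => (1 : ℝ) / n) + ε • B) -ᵥ (fun _ => (1 : ℝ) / n)
        ∈ vectorSpan ℝ (OmegaPoly n d) :=
      vsub_mem_vectorSpan ℝ hmem2 hmem1
    have h3 : ((fun _ => (1 : ℝ) / n) + ε • B) -ᵥ (fun _ => (1 : ℝ) / n) = ε • B := by
      simp [vsub_eq_sub]
    rw [h3] at hv
    have := Submodule.smul_mem _ ε⁻¹ hv
    rwa [inv_smul_smul₀ (ne_of_gt hεpos)] at this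


/-- The affine dimension of `Ω⁽ᵈ⁾ₙ` is `(n-1)^(d+1)`; consequently every vertex has
support of size at most `n^(d+1) − (n−1)^(d+1)`. -/
theorem stmt12 (n d : ℕ) (hn : 1 ≤ n) (hd : 1 ≤ d) :
    Module.finrank ℝ (affineSpan ℝ (OmegaPoly n d)).direction = (n - 1) ^ (d + 1) ∧
    ∀ A, IsVertex (OmegaPoly n d) A →
      Set.ncard {x | A x ≠ 0} ≤ n ^ (d + 1) - (n - 1) ^ (d + 1) := by
  classical
  refine ⟨by rw [direction_eq n d hn]; exact finrank_lineKer n d hn, ?_⟩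
  intro A hA
  by_contra hcon
  push_neg at hcon
  have hcard : Fintype.card (Fin (d + 1) → Fin n) = n ^ (d + 1) := by simp
  set S : Finset (Fin (d + 1) → Fin n) := Finset.univ.filter (fun x => A x ≠ 0) with hS
  have hsupp : {x | A x ≠ 0} = ↑S := by ext x; simp [hS]
  rw [hsupp, Set.ncard_coe_finset] at hcon
  set Z : Finset (Fin (d + 1) → Fin n) := Finset.univ.filter (fun x => A x = 0) with hZ
  have hSZ : Z.card + S.card = n ^ (d + 1) := by
    rw [← hcard, ← Finset.card_univ, hS, hZ]
    exact Finset.card_filter_add_card_filter_not _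
  have hpow : (n - 1) ^ (d + 1) ≤ n ^ (d + 1) := Nat.pow_le_pow_left (Nat.sub_le n 1) _
  have hZlt : Z.card < (n - 1) ^ (d + 1) := by omega
  -- restriction to Z
  let ψ : ↥(lineKer n d) →ₗ[ℝ] (↥Z → ℝ) :=
    { toFun := fun B z => B.val z.val
      map_add' := fun _ _ => rfl
      map_smul' := fun _ _ => rfl }
  have hker : 0 < Module.finrank ℝ ↥(LinearMap.ker ψ) := by
    have h1 := LinearMap.finrank_range_add_finrank_ker ψ
    have h2 : Module.finrank ℝ ↥(LinearMap.range ψ) ≤ Z.card := by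
      have h3 := Submodule.finrank_le (LinearMap.range ψ)
      rwa [Module.finrank_fintype_fun_eq_card, Fintype.card_coe] at h3
    rw [finrank_lineKer n d hn] at h1
    omega
  have : Nontrivial ↥(LinearMap.ker ψ) := Module.nontrivial_of_finrank_pos hker
  obtain ⟨B₀, hB₀ne⟩ := exists_ne (0 : ↥(LinearMap.ker ψ))
  set B : (Fin (d + 1) → Fin n) → ℝ := (B₀.val : ↥(lineKer n d)).val with hBdef
  have hBmem : B ∈ lineKer n d := (B₀.val : ↥(lineKer n d)).2
  have hBZ : ∀ x, A x = 0 → B x = 0 := by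
    intro x hx
    have hxZ : x ∈ Z := by simp [hZ, hx]
    have := B₀.2
    rw [LinearMap.mem_ker] at this
    exact congrFun this ⟨x, hxZ⟩
  have hBne : B ≠ 0 := by
    intro h
    apply hB₀ne
    apply Subtype.ext; apply Subtype.ext; exact h
  have hAΩ := hA.1
  have hAnn := hAΩ.1
  have hSne : S.Nonempty := by
    rcases Finset.eq_empty_or_nonempty S with he | h
    · exfalso
      have hz : ∀ x, A x = 0 := by
        intro x
        by_contra hx
        exact Finset.notMem_empty x (he ▸ (by simp [hS, hx] : x ∈ S))
      have h1 := hAΩ.2 0 (fun _ => ⟨0, hn⟩)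
      rw [Finset.sum_congr rfl (fun v _ => hz _)] at h1
      simp at h1
    · exact h
  set T := S.image A with hT
  have hTne : T.Nonempty := hSne.image A
  set δ := T.min' hTne with hδ
  have hδpos : 0 < δ := by
    obtain ⟨x, hxS, hxδ⟩ := Finset.mem_image.mp (T.min'_mem hTne)
    have hxne : A x ≠ 0 := by simpa [hS] using hxS
    rw [hδ, ← hxδ]
    exact lt_of_le_of_ne (hAnn x) (Ne.symm hxne)
  have hδle : ∀ x, A x ≠ 0 → δ ≤ A x := by
    intro x hx
    exact T.min'_le _ (Finset.mem_image_of_mem A (by simp [hS, hx]))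
  set ε : ℝ := δ / (‖B‖ + 1) with hε
  have hεpos : 0 < ε := by positivity
  have hεB : ε * ‖B‖ ≤ δ := by
    have hkey : ε * (‖B‖ + 1) = δ := div_mul_cancel₀ _ (by positivity)
    nlinarith [hεpos]
  have hmem : ∀ s : ℝ, |s| ≤ ε → A + s • B ∈ OmegaPoly n d := by
    intro s hs
    constructor
    · intro x
      simp only [Pi.add_apply, Pi.smul_apply, smul_eq_mul]
      by_cases hx : A x = 0
      · rw [hx, hBZ x hx, mul_zero, add_zero]
      · have h1 : δ ≤ A x := hδle x hx
        have h2 : |s * B x| ≤ ε * ‖B‖ := by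
          rw [abs_mul]
          have hb : |B x| ≤ ‖B‖ := by
            simpa [Real.norm_eq_abs] using norm_le_pi_norm B x
          exact mul_le_mul hs hb (abs_nonneg _) (le_of_lt hεpos)
        have h3 := neg_abs_le (s * B x)
        linarith
    · intro t x
      simp only [Pi.add_apply, Pi.smul_apply, smul_eq_mul]
      rw [Finset.sum_add_distrib, hAΩ.2 t x, ← Finset.mul_sum, hBmem t x, mul_zero, add_zero]
  have hm1 := hmem ε (by rw [abs_of_pos hεpos])
  have hm2 := hmem (-ε) (by rw [abs_neg, abs_of_pos hεpos])
  have heq : A = (1 / 2 : ℝ) • ((A + ε • B) + (A + (-ε) • B)) := by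
    funext x
    simp only [Pi.smul_apply, Pi.add_apply, smul_eq_mul]
    ring
  have hBC := hA.2 _ hm1 _ hm2 heq
  have hcancel : ε • B = (-ε) • B := by
    have := add_left_cancel hBC
    exact this
  have : (ε - (-ε)) • B = 0 := by rw [sub_smul, hcancel, sub_self]
  rcases smul_eq_zero.mp this with h | h
  · have : ε - (-ε) = 2 * ε := by ring
    rw [this] at h; nlinarith
  · exact hBne h
end

section
/- The 2 × 2 × 2 array A with A(1,1,1) = A(2,2,1) = A(1,2,2) = A(2,1,2) = 1/2 and all other entries 0 is a vertex of Σ⁽²⁾₂, the polytope of 2 × 2 × 2 nonnegative arrays whose every coordinate hyperplane sums to 1, and A is not a zero-one array (hence Σ⁽²⁾₂ has vertices outside T⁽²⁾₂). -/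
/-- `Σ⁽²⁾ₙ`: nonnegative `n × n × n` arrays in which every coordinate hyperplane
sums to 1. -/
def Sigma2 (n : ℕ) : Set (Fin n → Fin n → Fin n → ℝ) :=
  {A | (∀ i j k, 0 ≤ A i j k) ∧
    (∀ i, ∑ j, ∑ k, A i j k = 1) ∧
    (∀ j, ∑ i, ∑ k, A i j k = 1) ∧
    (∀ k, ∑ i, ∑ j, A i j k = 1)}

/-- The `2 × 2 × 2` array with `A(1,1,1) = A(2,2,1) = A(1,2,2) = A(2,1,2) = 1/2` and
all other entries 0 is a vertex of `Σ⁽²⁾₂` that is not a zero-one array. -/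
theorem stmt16 :
    let A : Fin 2 → Fin 2 → Fin 2 → ℝ := fun i j k =>
      if (k = 0 ∧ i = j) ∨ (k = 1 ∧ i ≠ j) then 1 / 2 else 0
    IsVertex (Sigma2 2) A ∧ ¬ (∀ i j k, A i j k = 0 ∨ A i j k = 1) := by
  intro A
  have hAval : ∀ i j k, A i j k =
      if (k = 0 ∧ i = j) ∨ (k = 1 ∧ i ≠ j) then 1 / 2 else 0 := fun _ _ _ => rfl
  refine ⟨⟨?_, ?_⟩, ?_⟩
  · refine ⟨?_, ?_, ?_, ?_⟩
    · intro i j k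
      rw [hAval]
      split <;> norm_num
    · intro i; fin_cases i <;> simp [A, Fin.sum_univ_two] <;> norm_num
    · intro j; fin_cases j <;> simp [A, Fin.sum_univ_two] <;> norm_num
    · intro k; fin_cases k <;> simp [A, Fin.sum_univ_two] <;> norm_num
  · intro B hB C hC hEq
    obtain ⟨hB0, hBi, hBj, hBk⟩ := hB
    obtain ⟨hC0, hCi, hCj, hCk⟩ := hC
    have hpt : ∀ i j k, A i j k = (B i j k + C i j k) / 2 := by
      intro i j k
      have := congrFun (congrFun (congrFun hEq i) j) k
      simp only [Pi.smul_apply, Pi.add_apply, smul_eq_mul] at this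
      linarith
    have hz : ∀ i j k, A i j k = 0 → B i j k = 0 ∧ C i j k = 0 := by
      intro i j k h
      have h1 := hpt i j k
      have h2 := hB0 i j k
      have h3 := hC0 i j k
      constructor <;> linarith
    -- zero entries
    have z1 := hz 0 1 0 (by norm_num [hAval])
    have z2 := hz 1 0 0 (by norm_num [hAval])
    have z3 := hz 0 0 1 (by norm_num [hAval])
    have z4 := hz 1 1 1 (by norm_num [hAval])
    -- sum equations for B
    have bi0 := hBi 0; have bi1 := hBi 1
    have bj0 := hBj 0; have bk0 := hBk 0; have bk1 := hBk 1
    have ci0 := hCi 0; have ci1 := hCi 1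
    have cj0 := hCj 0; have ck0 := hCk 0; have ck1 := hCk 1
    simp only [Fin.sum_univ_two] at bi0 bi1 bj0 bk0 bk1 ci0 ci1 cj0 ck0 ck1
    obtain ⟨zb1, zc1⟩ := z1
    obtain ⟨zb2, zc2⟩ := z2
    obtain ⟨zb3, zc3⟩ := z3
    obtain ⟨zb4, zc4⟩ := z4
    funext i j k
    fin_cases i <;> fin_cases j <;> fin_cases k <;> simp only [Fin.mk_zero, Fin.mk_one] <;> linarith
  · intro h
    have := h 0 0 0
    norm_num [hAval] at this
end

section
/- Let A ∈ Σ⁽²⁾ₙ be an array all of whose nonzero entries equal 1/2, with exactly two 1/2-entries in each coordinate hyperplane. Define the graph Ḡ(A) on supp(A) joining two support elements iff they agree in at least one coordinate position's value (lie in a common coordinate hyperplane). If Ḡ(A) is connected and contains an odd cycle, then A is a vertex of Σ⁽²⁾ₙ. -/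
/-- The graph `Ḡ(A)` on the support of `A`, joining two support elements iff they lie
in a common coordinate hyperplane (agree in at least one coordinate). -/
def hypGraph {n : ℕ} (A : Fin n → Fin n → Fin n → ℝ) :
    SimpleGraph {x : Fin n × Fin n × Fin n // A x.1 x.2.1 x.2.2 ≠ 0} where
  Adj x y := x ≠ y ∧ (x.1.1 = y.1.1 ∨ x.1.2.1 = y.1.2.1 ∨ x.1.2.2 = y.1.2.2)
  symm := by
    constructor
    rintro x y ⟨hxy, h⟩
    refine ⟨hxy.symm, ?_⟩
    rcases h with h | h | h
    · exact Or.inl h.symm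
    · exact Or.inr (Or.inl h.symm)
    · exact Or.inr (Or.inr h.symm)
  loopless := by constructor; rintro x ⟨hx, -⟩; exact hx rfl

namespace SimpleGraph

variable {V α : Type*} [AddCommGroup α] [LinearOrder α] {G : SimpleGraph V} {f : V → α}

lemma Reachable.abs_eq_of_forall_adj_eq_neg (hf : ∀ x y, G.Adj x y → f y = -f x) {x y : V}
    (h : G.Reachable x y) : |f x| = |f y| := by
  obtain ⟨w⟩ := h
  induction w with
  | nil => rfl
  | cons hadj _ ih => rw [← ih, hf _ _ hadj, abs_neg]

lemma colorable_two_of_forall_adj_eq_neg [IsOrderedAddMonoid α]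
    (hf : ∀ x y, G.Adj x y → f y = -f x) (hne : ∀ x, f x ≠ 0) : G.Colorable 2 := by
  refine ⟨Coloring.mk (fun x => if 0 < f x then 0 else 1) fun {x y} hadj => ?_⟩
  have hy := hf x y hadj
  rcases (hne x).lt_or_gt with hx | hx
  · simp [hx.not_gt, hy, hx]
  · simp [hx, hy, hx.le]

lemma Connected.eq_zero_of_forall_adj_eq_neg [IsOrderedAddMonoid α] (hG : G.Connected)
    (hodd : ¬ G.Colorable 2) (hf : ∀ x y, G.Adj x y → f y = -f x) (x : V) : f x = 0 := by
  by_contra hx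
  refine hodd (colorable_two_of_forall_adj_eq_neg hf fun y hy => hx ?_)
  rw [← abs_eq_zero, (hG.preconnected x y).abs_eq_of_forall_adj_eq_neg hf, hy, abs_zero]

end SimpleGraph

lemma Finset.sum_eq_add_of_card_eq_two {ι M : Type*} [DecidableEq ι] [AddCommMonoid M]
    {s : Finset ι} {g : ι → M} {x y : ι} (hs : s.card = 2) (hx : x ∈ s) (hy : y ∈ s)
    (hxy : x ≠ y) : ∑ p ∈ s, g p = g x + g y := by
  have hpair : {x, y} = s :=
    eq_of_subset_of_card_le (insert_subset_iff.2 ⟨hx, singleton_subset_iff.2 hy⟩)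
      (by rw [hs, card_pair hxy])
  rw [← hpair, sum_pair hxy]

lemma sub_eq_neg_sub_of_card_support_eq_two {κ M : Type*} [Fintype κ] [AddCommGroup M]
    [DecidableEq M] {a b c : κ → M}
    (hcard : (Finset.univ.filter fun p => a p ≠ 0).card = 2)
    (hb : ∀ p, a p = 0 → b p = 0) (hc : ∀ p, a p = 0 → c p = 0)
    (hsum : ∑ p, b p = ∑ p, c p) {p q : κ} (hp : a p ≠ 0) (hq : a q ≠ 0) (hpq : p ≠ q) :
    b q - c q = -(b p - c p) := by
  classical
  have hsum_supp : ∀ g : κ → M, (∀ p, a p = 0 → g p = 0) → ∑ p, g p = g p + g q := by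
    intro g hg
    rw [← Finset.sum_filter_of_ne fun r _ hr => mt (hg r) hr]
    exact Finset.sum_eq_add_of_card_eq_two hcard (by simpa using hp) (by simpa using hq) hpq
  have hpair : b p + b q = c p + c q := hsum_supp b hb ▸ hsum_supp c hc ▸ hsum
  rw [neg_sub, sub_eq_sub_iff_add_eq_add, add_comm, hpair, add_comm]

namespace Sigma2

variable {n : ℕ} {A B C : Fin n → Fin n → Fin n → ℝ}

lemma eq_zero_of_midpoint_eq_zero (hB : B ∈ Sigma2 n) (hC : C ∈ Sigma2 n)
    (hABC : A = (1 / 2 : ℝ) • (B + C)) {i j k : Fin n} (hA : A i j k = 0) : B i j k = 0 := by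
  have hmid : A i j k = (B i j k + C i j k) / 2 := by
    rw [hABC]; simp only [Pi.smul_apply, Pi.add_apply, smul_eq_mul]; ring
  linarith [hB.1 i j k, hC.1 i j k]

lemma sub_eq_neg_sub_of_adj
    (htwo1 : ∀ i, (Finset.univ.filter fun p : Fin n × Fin n => A i p.1 p.2 ≠ 0).card = 2)
    (htwo2 : ∀ j, (Finset.univ.filter fun p : Fin n × Fin n => A p.1 j p.2 ≠ 0).card = 2)
    (htwo3 : ∀ k, (Finset.univ.filter fun p : Fin n × Fin n => A p.1 p.2 k ≠ 0).card = 2)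
    (hB : B ∈ Sigma2 n) (hC : C ∈ Sigma2 n)
    (hBz : ∀ i j k, A i j k = 0 → B i j k = 0) (hCz : ∀ i j k, A i j k = 0 → C i j k = 0)
    {x y : {x : Fin n × Fin n × Fin n // A x.1 x.2.1 x.2.2 ≠ 0}} (hxy : (hypGraph A).Adj x y) :
    B y.1.1 y.1.2.1 y.1.2.2 - C y.1.1 y.1.2.1 y.1.2.2 =
      -(B x.1.1 x.1.2.1 x.1.2.2 - C x.1.1 x.1.2.1 x.1.2.2) := by
  obtain ⟨⟨i, j, k⟩, hx⟩ := x
  obtain ⟨⟨i', j', k'⟩, hy⟩ := y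
  obtain ⟨hne, rfl | rfl | rfl⟩ := hxy
  · exact sub_eq_neg_sub_of_card_support_eq_two (htwo1 i) (fun p => hBz i p.1 p.2)
      (fun p => hCz i p.1 p.2) (by simp only [Fintype.sum_prod_type, hB.2.1, hC.2.1])
      (p := (j, k)) (q := (j', k')) hx hy (by rintro ⟨⟩; exact hne rfl)
  · exact sub_eq_neg_sub_of_card_support_eq_two (htwo2 j) (fun p => hBz p.1 j p.2)
      (fun p => hCz p.1 j p.2) (by simp only [Fintype.sum_prod_type, hB.2.2.1, hC.2.2.1])
      (p := (i, k)) (q := (i', k')) hx hy (by rintro ⟨⟩; exact hne rfl)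
  · exact sub_eq_neg_sub_of_card_support_eq_two (htwo3 k) (fun p => hBz p.1 p.2 k)
      (fun p => hCz p.1 p.2 k) (by simp only [Fintype.sum_prod_type, hB.2.2.2, hC.2.2.2])
      (p := (i, j)) (q := (i', j')) hx hy (by rintro ⟨⟩; exact hne rfl)

end Sigma2

theorem stmt17_general {n : ℕ} (A : Fin n → Fin n → Fin n → ℝ) (hA : A ∈ Sigma2 n)
    (htwo1 : ∀ i, (Finset.univ.filter fun p : Fin n × Fin n => A i p.1 p.2 ≠ 0).card = 2)
    (htwo2 : ∀ j, (Finset.univ.filter fun p : Fin n × Fin n => A p.1 j p.2 ≠ 0).card = 2)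
    (htwo3 : ∀ k, (Finset.univ.filter fun p : Fin n × Fin n => A p.1 p.2 k ≠ 0).card = 2)
    (hconn : (hypGraph A).Connected) (hodd : ¬ (hypGraph A).Colorable 2) :
    IsVertex (Sigma2 n) A := by
  refine ⟨hA, fun B hB C hC hABC => ?_⟩
  have hBz : ∀ i j k, A i j k = 0 → B i j k = 0 := fun i j k =>
    Sigma2.eq_zero_of_midpoint_eq_zero hB hC hABC
  have hCz : ∀ i j k, A i j k = 0 → C i j k = 0 := fun i j k =>
    Sigma2.eq_zero_of_midpoint_eq_zero hC hB (add_comm B C ▸ hABC)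
  have hdev := hconn.eq_zero_of_forall_adj_eq_neg hodd fun _ _ hxy =>
    Sigma2.sub_eq_neg_sub_of_adj htwo1 htwo2 htwo3 hB hC hBz hCz hxy
  funext i j k
  by_cases hA0 : A i j k = 0
  · rw [hBz i j k hA0, hCz i j k hA0]
  · exact sub_eq_zero.mp (hdev ⟨(i, j, k), hA0⟩)

/-- If `A ∈ Σ⁽²⁾ₙ` has all nonzero entries equal to `1/2`, exactly two `1/2`-entries in
each coordinate hyperplane, and `Ḡ(A)` is connected and non-bipartite (contains an odd
cycle), then `A` is a vertex of `Σ⁽²⁾ₙ`. -/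
theorem stmt17 {n : ℕ} (A : Fin n → Fin n → Fin n → ℝ) (hA : A ∈ Sigma2 n)
    (hhalf : ∀ i j k, A i j k ≠ 0 → A i j k = 1 / 2)
    (htwo1 : ∀ i, (Finset.univ.filter fun p : Fin n × Fin n => A i p.1 p.2 ≠ 0).card = 2)
    (htwo2 : ∀ j, (Finset.univ.filter fun p : Fin n × Fin n => A p.1 j p.2 ≠ 0).card = 2)
    (htwo3 : ∀ k, (Finset.univ.filter fun p : Fin n × Fin n => A p.1 p.2 k ≠ 0).card = 2)
    (hconn : (hypGraph A).Connected) (hodd : ¬ (hypGraph A).Colorable 2) :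
    IsVertex (Sigma2 n) A :=
  stmt17_general A hA htwo1 htwo2 htwo3 hconn hodd
end
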